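/- Let ℒ be a ccs class of countable scattered linear orders. Then the quasi-order ⊴^ℒ on countably infinite linear orders has no maximal element: for every countably infinite linear order L there is a countably infinite linear order L' with L ⊴^ℒ L' but not L' ⊴^ℒ L. -/

import Mathlib

universe u v w x

/-- A `K`-convex partition of `L`: a partition of `L` into nonempty pieces indexed by `K`
such that `k < k'` iff every element of `P k` is below every element of `P k'`. -/
def IsConvexPartition {K : Type u} {L : Type v} [LinearOrder K] [LinearOrder L]
    (P : K → Set L) : Prop :=
  (∀ k, (P k).Nonempty) ∧ (∀ y : L, ∃! k, y ∈ P k) ∧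
    ∀ k k' : K, k < k' ↔ ∀ a ∈ P k, ∀ b ∈ P k', a < b

/-- `ℒ`-convex embeddability: `L ⊴^ℒ L'` iff there are `K ∈ ℒ`, a `K`-convex partition of `L`,
and an order embedding of `L` into `L'` mapping each piece onto a convex set. -/
def LCE (ℒ : Set LinOrd.{u}) (L : Type v) (L' : Type w)
    [LinearOrder L] [LinearOrder L'] : Prop :=
  ∃ K ∈ ℒ, ∃ P : ↥K → Set L, IsConvexPartition P ∧
    ∃ f : L ↪o L', ∀ k : ↥K, (⇑f '' P k).OrdConnected

/-- `ℒ` is closed under convex sums (ccs). -/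
def CCS (ℒ : Set LinOrd.{u}) : Prop :=
  ∀ K ∈ ℒ, ∀ K' ∈ ℒ, ∀ P : ↥K → Set ↥K',
    (∀ k, (P k).Nonempty) → (∀ k, (P k).OrdConnected) →
    (∀ k₀ k₁ : ↥K, k₀ < k₁ → ∀ a ∈ P k₀, ∀ b ∈ P k₁, a ≤ b) →
    ∃ M ∈ ℒ, Nonempty (Lex ((k : ↥K) × ↥(P k)) ≃o ↥M)

/-!
Let `B` be a countable ordinal admitting no convex embedding into `L`: a convex well-ordered
subset of `L` with least element `m` lies inside the well-ordered set `wellOrderedFrom m`, whose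
type is countable, so any countable ordinal above all these types will do. Put
`L' = ℚ ×ₗ (L ⊕ₗ B)`. A single piece shows `L ⊴^ℒ L'`, as `L` sits convexly in one fibre.
Conversely, in a `K`-convex partition of `L'` with `K` scattered, the pieces containing `(q, x₀)`,
`q ∈ ℚ`, cannot be pairwise distinct, so by convexity one piece contains a whole fibre
`{r} × (L ⊕ₗ B)`; its image in `L` is convex, hence so is that of `B`.
-/

open Set Ordinal Cardinal

section WellOrderedFrom

variable {L : Type u} [LinearOrder L]

def wellOrderedFrom (m : L) : Set L :=
  {x | m ≤ x ∧ (Icc m x).WellFoundedOn (· < ·)}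

theorem wellFoundedOn_wellOrderedFrom (m : L) : (wellOrderedFrom m).WellFoundedOn (· < ·) := by
  rw [wellFoundedOn_iff_no_descending_seq]
  intro f hf
  have hle : ∀ n, f n ≤ f 0 := fun n => by
    rcases n.eq_zero_or_pos with rfl | hn
    exacts [le_rfl, (f.map_rel_iff.2 hn).le]
  exact (wellFoundedOn_iff_no_descending_seq.1 (hf 0).2) f fun n => ⟨(hf n).1, hle n⟩

instance (m : L) : WellFoundedLT (wellOrderedFrom m) := ⟨wellFoundedOn_wellOrderedFrom m⟩

theorem exists_typeLT_le_wellOrderedFrom {α : Type u} [LinearOrder α] [WellFoundedLT α]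
    [Nonempty α] (F : α ↪o L) (hF : (range F).OrdConnected) :
    ∃ m : L, typeLT α ≤ typeLT (wellOrderedFrom m) := by
  let _ := WellFoundedLT.toOrderBot α
  have hwf : (range F).WellFoundedOn (· < ·) :=
    wellFoundedOn_range.2 <| Subrelation.wf (fun h => F.lt_iff_lt.1 h) wellFounded_lt
  have hsub : ∀ a, F a ∈ wellOrderedFrom (F ⊥) := fun a =>
    ⟨F.monotone bot_le, hwf.subset (hF.out (mem_range_self ⊥) (mem_range_self a))⟩
  let E : α ↪o wellOrderedFrom (F ⊥) :=
    OrderEmbedding.ofStrictMono (fun a => ⟨F a, hsub a⟩) fun _ _ h => F.strictMono h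
  exact ⟨F ⊥, type_le_iff'.2 ⟨E.ltEmbedding⟩⟩

theorem typeLT_wellOrderedFrom_lt_omega_one [Countable L] (m : L) :
    typeLT (wellOrderedFrom m) < ω₁ := by
  rw [lt_omega_iff_card_lt, card_type, ← succ_aleph0, Order.lt_succ_iff]
  exact mk_le_aleph0

end WellOrderedFrom

theorem exists_countable_not_ordConnected_embedding (L : Type u) [LinearOrder L] [Countable L] :
    ∃ (B : Type u) (_ : LinearOrder B), Countable B ∧ Nonempty B ∧
      ∀ F : B ↪o L, ¬(range F).OrdConnected := by
  set s := ⨆ m : L, typeLT (wellOrderedFrom m)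
  have hs : s < s + 1 := Order.lt_add_one_iff.2 le_rfl
  have hω₁ : s + 1 < ω₁ := (isSuccLimit_omega 1).add_one_lt
    (iSup_lt_omega_one typeLT_wellOrderedFrom_lt_omega_one)
  have hne : Nonempty (s + 1).ToType := nonempty_toType_iff.2 hs.ne_bot
  refine ⟨(s + 1).ToType, inferInstance, ?_, hne, fun F hF => ?_⟩
  · rw [← mk_le_aleph0_iff, mk_toType, ← Order.lt_succ_iff, succ_aleph0,
      ← lt_omega_iff_card_lt]
    exact hω₁
  · obtain ⟨m, hm⟩ := exists_typeLT_le_wellOrderedFrom F hF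
    rw [type_toType] at hm
    exact (hm.trans (Ordinal.le_iSup _ m)).not_gt hs

section ConvexEmbeddings

variable {α β γ : Type*} [LinearOrder α] [LinearOrder β] [LinearOrder γ]

theorem OrderEmbedding.ordConnected_image_of_subset (f : α ↪o β) {S T : Set α} (hST : S ⊆ T)
    (hS : S.OrdConnected) (hT : (f '' T).OrdConnected) : (f '' S).OrdConnected := by
  refine ⟨?_⟩
  rintro _ ⟨a, ha, rfl⟩ _ ⟨b, hb, rfl⟩ z hz
  obtain ⟨c, -, rfl⟩ := hT.out (mem_image_of_mem f (hST ha)) (mem_image_of_mem f (hST hb)) hz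
  exact mem_image_of_mem f (hS.out ha hb ⟨f.le_iff_le.1 hz.1, f.le_iff_le.1 hz.2⟩)

theorem OrderEmbedding.ordConnected_range_trans (f : α ↪o β) (g : β ↪o γ)
    (hf : (range f).OrdConnected) (hg : (range g).OrdConnected) :
    (range (f.trans g)).OrdConnected := by
  rw [RelEmbedding.coe_trans, range_comp]
  exact g.ordConnected_image_of_subset (subset_univ _) hf (by rwa [image_univ])

def sumLexInl : α ↪o α ⊕ₗ β :=
  OrderEmbedding.ofMapLEIff (fun a => toLex (Sum.inl a)) fun _ _ => Sum.Lex.inl_le_inl_iff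

def sumLexInr : β ↪o α ⊕ₗ β :=
  OrderEmbedding.ofMapLEIff (fun b => toLex (Sum.inr b)) fun _ _ => Sum.Lex.inr_le_inr_iff

def prodLexFiber (a : α) : β ↪o α ×ₗ β :=
  OrderEmbedding.ofMapLEIff (fun b => toLex (a, b)) fun _ _ => by simp [Prod.Lex.toLex_le_toLex]

theorem ordConnected_range_sumLexInl : (range (sumLexInl : α ↪o α ⊕ₗ β)).OrdConnected := by
  refine ⟨?_⟩
  rintro _ ⟨a, rfl⟩ _ ⟨b, rfl⟩ z hz
  rcases z with c | c
  · exact ⟨c, rfl⟩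
  · exact absurd hz.2 Sum.Lex.not_inr_le_inl

theorem ordConnected_range_sumLexInr : (range (sumLexInr : β ↪o α ⊕ₗ β)).OrdConnected := by
  refine ⟨?_⟩
  rintro _ ⟨a, rfl⟩ _ ⟨b, rfl⟩ z hz
  rcases z with c | c
  · exact absurd hz.1 Sum.Lex.not_inr_le_inl
  · exact ⟨c, rfl⟩

theorem ordConnected_range_prodLexFiber (a : α) :
    (range (prodLexFiber a : β ↪o α ×ₗ β)).OrdConnected := by
  refine ⟨?_⟩
  rintro _ ⟨b, rfl⟩ _ ⟨b', rfl⟩ z hz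
  have hfst : (ofLex z).1 = a :=
    le_antisymm (Prod.Lex.monotone_fst_ofLex hz.2) (Prod.Lex.monotone_fst_ofLex hz.1)
  exact ⟨(ofLex z).2, by rw [← hfst]; rfl⟩

end ConvexEmbeddings

namespace IsConvexPartition

variable {K : Type u} {L : Type v} [LinearOrder K] [LinearOrder L] {P : K → Set L}

theorem ordConnected (hP : IsConvexPartition P) (k : K) : (P k).OrdConnected := by
  refine ⟨fun a ha b hb c hc => ?_⟩
  obtain ⟨k', hk'⟩ := (hP.2.1 c).exists
  rcases lt_trichotomy k' k with h | rfl | h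
  · exact absurd ((hP.2.2 k' k).1 h c hk' a ha) hc.1.not_gt
  · exact hk'
  · exact absurd ((hP.2.2 k k').1 h b hb c hk') hc.2.not_gt

noncomputable def index (hP : IsConvexPartition P) (y : L) : K :=
  (hP.2.1 y).exists.choose

theorem mem_index (hP : IsConvexPartition P) (y : L) : y ∈ P (hP.index y) :=
  (hP.2.1 y).exists.choose_spec

theorem monotone_index (hP : IsConvexPartition P) : Monotone hP.index := fun x y hxy =>
  not_lt.1 fun h => ((hP.2.2 _ _).1 h y (hP.mem_index y) x (hP.mem_index x)).not_ge hxy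

end IsConvexPartition

theorem lce_of_ordConnected_range {ℒ : Set LinOrd.{u}} {K : LinOrd.{u}} (hK : K ∈ ℒ) [Unique K]
    {L : Type v} {L' : Type w} [LinearOrder L] [LinearOrder L'] [Nonempty L] (f : L ↪o L')
    (hf : (range f).OrdConnected) : LCE ℒ L L' := by
  refine ⟨K, hK, fun _ => univ, ⟨fun _ => univ_nonempty,
    fun _ => ⟨default, trivial, fun k _ => Unique.uniq _ k⟩, fun k k' => ?_⟩,
    f, fun _ => by rwa [image_univ]⟩
  obtain ⟨y⟩ := ‹Nonempty L›
  exact iff_of_false (by simp [Subsingleton.elim k k'])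
    fun h => lt_irrefl y (h y trivial y trivial)

theorem exists_ordConnected_embedding_of_lce_ratLex {ℒ : Set LinOrd.{u}}
    (hscat : ∀ K ∈ ℒ, ¬Nonempty (ℚ ↪o K)) {M : Type v} {L : Type w} [LinearOrder M]
    [Nonempty M] [LinearOrder L] (h : LCE ℒ (ℚ ×ₗ M) L) : ∃ F : M ↪o L, (range F).OrdConnected := by
  obtain ⟨K, hK, P, hP, f, hf⟩ := h
  obtain ⟨x₀⟩ := ‹Nonempty M›
  set g : ℚ → K := fun q => hP.index (prodLexFiber q x₀)
  have hg : Monotone g := hP.monotone_index.comp fun q q' hq => Prod.Lex.toLex_mono ⟨hq, le_rfl⟩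
  by_cases hstrict : StrictMono g
  · exact absurd ⟨OrderEmbedding.ofStrictMono g hstrict⟩ (hscat K hK)
  obtain ⟨q, q', hqq', hgq⟩ : ∃ q q', q < q' ∧ g q' ≤ g q := by
    simpa [StrictMono] using hstrict
  obtain ⟨r, hqr, hrq'⟩ := exists_between hqq'
  have hfiber : range (prodLexFiber r : M ↪o ℚ ×ₗ M) ⊆ P (g q) := by
    rintro _ ⟨x, rfl⟩
    have hq' : prodLexFiber q' x₀ ∈ P (g q) := le_antisymm hgq (hg hqq'.le) ▸ hP.mem_index _
    refine (hP.ordConnected (g q)).out (hP.mem_index _) hq' ⟨?_, ?_⟩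
    · exact (Prod.Lex.toLex_lt_toLex.2 (Or.inl hqr)).le
    · exact (Prod.Lex.toLex_lt_toLex.2 (Or.inl hrq')).le
  refine ⟨(prodLexFiber r).trans f, ?_⟩
  rw [RelEmbedding.coe_trans, range_comp]
  exact f.ordConnected_image_of_subset hfiber (ordConnected_range_prodLexFiber r) (hf _)

theorem stmt_16_general (ℒ : Set LinOrd.{0}) (hne : ℒ.Nonempty)
    (hmem : ∀ A ∈ ℒ, Nonempty ↥A ∧ Countable ↥A ∧ ¬ Nonempty (ℚ ↪o ↥A))
    (hdc : ∀ A ∈ ℒ, ∀ B : LinOrd.{0}, Nonempty ↥B → Countable ↥B →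
      Nonempty (↥B ↪o ↥A) → B ∈ ℒ) :
    ∀ L : LinOrd.{0}, Countable ↥L → Infinite ↥L →
      ∃ L' : LinOrd.{0}, Countable ↥L' ∧ Infinite ↥L' ∧
        LCE ℒ ↥L ↥L' ∧ ¬ LCE ℒ ↥L' ↥L := by
  intro L _ _
  obtain ⟨B, _, _, _, hB⟩ := exists_countable_not_ordConnected_embedding L
  have hpunit : LinOrd.of PUnit ∈ ℒ := by
    obtain ⟨A, hA⟩ := hne
    obtain ⟨⟨a⟩, -, -⟩ := hmem A hA
    exact hdc A hA _ ⟨⟨⟩⟩ (inferInstanceAs (Countable PUnit))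
      ⟨OrderEmbedding.ofStrictMono (fun _ => a) fun _ _ h => absurd h (lt_irrefl _)⟩
  have : Unique (LinOrd.of PUnit) := inferInstanceAs (Unique PUnit)
  refine ⟨LinOrd.of (ℚ ×ₗ (L ⊕ₗ B)), inferInstanceAs (Countable (ℚ × (L ⊕ B))),
    inferInstanceAs (Infinite (ℚ × (L ⊕ B))), ?_, fun h => ?_⟩
  · exact lce_of_ordConnected_range hpunit ((sumLexInl (β := B)).trans (prodLexFiber (0 : ℚ)))
      (OrderEmbedding.ordConnected_range_trans _ _ ordConnected_range_sumLexInl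
        (ordConnected_range_prodLexFiber _))
  · obtain ⟨F, hF⟩ :=
      exists_ordConnected_embedding_of_lce_ratLex (fun K hK => (hmem K hK).2.2) h
    exact hB (sumLexInr.trans F)
      (sumLexInr.ordConnected_range_trans F ordConnected_range_sumLexInr hF)

/-- For a ccs class `ℒ` of countable scattered linear orders, `⊴^ℒ` has no maximal element
among countably infinite linear orders. -/
theorem stmt_16 (ℒ : Set LinOrd.{0}) (hne : ℒ.Nonempty)
    (hmem : ∀ A ∈ ℒ, Nonempty ↥A ∧ Countable ↥A ∧ ¬ Nonempty (ℚ ↪o ↥A))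
    (hdc : ∀ A ∈ ℒ, ∀ B : LinOrd.{0}, Nonempty ↥B → Countable ↥B →
      Nonempty (↥B ↪o ↥A) → B ∈ ℒ)
    (hccs : CCS ℒ) :
    ∀ L : LinOrd.{0}, Countable ↥L → Infinite ↥L →
      ∃ L' : LinOrd.{0}, Countable ↥L' ∧ Infinite ↥L' ∧
        LCE ℒ ↥L ↥L' ∧ ¬ LCE ℒ ↥L' ↥L :=
  stmt_16_general ℒ hne hmem hdc
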